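/- arXiv:2012.08204 — 6 statements merged into one kernel-verified Lean document; each statement's English description precedes it below -/
import Mathlib

section
/- With F(p,z) = log(1-p+p·e^z), for y, z in a compact subset of ℝ and γ → 0 one has (F(p,γ(z+y)) + F(p,γ(-z+y)))/2 = pγy + (1/2)p(1-p)γ²(z² + y²) + O(pγ³), uniformly in p ∈ [0,1]. -/
noncomputable def F (p z : ℝ) : ℝ := Real.log (1 - p + p * Real.exp z)

lemma exp_quad (w : ℝ) (hw : |w| ≤ 1/5) :
    |Real.exp w - 1 - w - w^2/2| ≤ |w|^3 := by
  have h := Real.exp_bound (x := w) (by linarith [abs_nonneg w]) (by norm_num : 0 < 3)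
  simp [Finset.sum_range_succ, Nat.factorial] at h
  have : Real.exp w - 1 - w - w^2/2 = Real.exp w - (1 + w + w^2/2) := by ring
  rw [this]
  calc |Real.exp w - (1 + w + w^2/2)| ≤ |w|^3 * (4/(6*3)) := by convert h using 2
    _ ≤ |w|^3 := by nlinarith [abs_nonneg w, pow_nonneg (abs_nonneg w) 3]

set_option maxHeartbeats 1000000 in
lemma key (p w : ℝ) (hp0 : 0 ≤ p) (hp1 : p ≤ 1) (hw : |w| ≤ 1/5) :
    |F p w - (p*w + p*(1-p)*w^2/2)| ≤ 19 * p * |w|^3 := by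
  have hw0 := abs_nonneg w
  set x := |w| with hxdef
  set ε := Real.exp w - 1 - w - w^2/2 with hεdef
  set t := p * (Real.exp w - 1) with htdef
  have heps : |ε| ≤ x^3 := exp_quad w hw
  set e := |ε| with hedef
  have he0 : 0 ≤ e := abs_nonneg ε
  have hεb := abs_le.mp heps
  have hwb : -x ≤ w ∧ w ≤ x := ⟨neg_abs_le w, le_abs_self w⟩
  have hx2 : x^2 = w^2 := sq_abs w
  have hE : |Real.exp w - 1| ≤ 2 * x := by
    have hval : Real.exp w - 1 = w + w^2/2 + ε := by rw [hεdef]; ring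
    rw [hval]
    calc |w + w^2/2 + ε| ≤ |w + w^2/2| + |ε| := abs_add_le _ _
      _ ≤ |w| + |w^2/2| + e := by linarith [abs_add_le w (w^2/2)]
      _ = x + x^2/2 + e := by rw [abs_div, abs_pow]; norm_num; linarith [hx2]
      _ ≤ 2 * x := by nlinarith
  have ht : |t| ≤ 2 * p * x := by
    rw [htdef, abs_mul, abs_of_nonneg hp0]
    nlinarith
  have hFt : F p w = Real.log (1 + t) := by
    unfold F; congr 1; rw [htdef]; ring
  have key2 : t - t^2/2 - (p*w + p*(1-p)*w^2/2)
      = p*ε - (p^2/2)*(w^3 + w^4/4 + 2*w*ε + w^2*ε + ε^2) := by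
    rw [htdef, hεdef]; ring
  have c2 : |w^3| + |w^4/4| + |2*w*ε| + |w^2*ε| + |ε^2|
      = x^3 + x^4/4 + 2*(x*e) + x^2*e + e^2 := by
    simp only [abs_pow, abs_div, abs_mul, ← hxdef, ← hedef]
    norm_num; ring
  clear_value x ε t e
  have ht' : |t| ≤ 2/5 := by nlinarith
  have hlog := Real.abs_log_sub_add_sum_range_le (x := -t) (by rw [abs_neg]; linarith [abs_nonneg t]) 2
  simp [Finset.sum_range_succ] at hlog
  have hlog2 : |Real.log (1 + t) - (t - t^2/2)| ≤ 2 * |t|^3 := by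
    have e1 : Real.log (1 + t) - (t - t^2/2) = -t + t^2/(1+1) + Real.log (1 + t) := by ring
    rw [e1]
    have h2 : |t|^3 / (1 - |t|) ≤ 2 * |t|^3 := by
      rw [div_le_iff₀ (by linarith)]
      nlinarith [pow_nonneg (abs_nonneg t) 3]
    linarith
  have ht3 : |t|^3 ≤ 8 * p * x^3 := by
    have hp3 : p^3 ≤ p := by nlinarith [mul_nonneg (mul_nonneg hp0 (by linarith : (0:ℝ) ≤ 1-p)) (by linarith : (0:ℝ) ≤ 1+p)]
    calc |t|^3 ≤ (2*p*x)^3 := pow_le_pow_left₀ (abs_nonneg t) ht 3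
      _ = 8 * p^3 * x^3 := by ring
      _ ≤ 8 * p * x^3 := by nlinarith [pow_nonneg hw0 3]
  have hS : |w^3 + w^4/4 + 2*w*ε + w^2*ε + ε^2| ≤ 2 * x^3 := by
    have c1 : |w^3 + w^4/4 + 2*w*ε + w^2*ε + ε^2|
        ≤ |w^3| + |w^4/4| + |2*w*ε| + |w^2*ε| + |ε^2| := by
      calc |w^3 + w^4/4 + 2*w*ε + w^2*ε + ε^2|
          ≤ |w^3 + w^4/4 + 2*w*ε + w^2*ε| + |ε^2| := abs_add_le _ _
        _ ≤ |w^3 + w^4/4 + 2*w*ε| + |w^2*ε| + |ε^2| := by linarith [abs_add_le (w^3 + w^4/4 + 2*w*ε) (w^2*ε)]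
        _ ≤ |w^3 + w^4/4| + |2*w*ε| + |w^2*ε| + |ε^2| := by linarith [abs_add_le (w^3 + w^4/4) (2*w*ε)]
        _ ≤ |w^3| + |w^4/4| + |2*w*ε| + |w^2*ε| + |ε^2| := by linarith [abs_add_le (w^3) (w^4/4)]
    rw [c2] at c1
    have hx3 : 0 ≤ x^3 := pow_nonneg hw0 3
    have hb1 : x^4 ≤ x^3/5 := by nlinarith
    have hb2 : x*e ≤ x^4 := by nlinarith
    have hb3 : x^2*e ≤ x^3/25 := by nlinarith [pow_nonneg hw0 2, sq_nonneg x]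
    have hb4 : e^2 ≤ x^3/125 := by nlinarith [pow_nonneg hw0 6]
    linarith
  have hmid : |t - t^2/2 - (p*w + p*(1-p)*w^2/2)| ≤ 3 * p * x^3 := by
    rw [key2]
    calc |p*ε - (p^2/2)*(w^3 + w^4/4 + 2*w*ε + w^2*ε + ε^2)|
        ≤ |p*ε| + |(p^2/2)*(w^3 + w^4/4 + 2*w*ε + w^2*ε + ε^2)| := abs_sub _ _
      _ = p*e + (p^2/2) * |w^3 + w^4/4 + 2*w*ε + w^2*ε + ε^2| := by
          rw [abs_mul, abs_mul, abs_of_nonneg hp0, abs_of_nonneg (by positivity : (0:ℝ) ≤ p^2/2), hedef]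
      _ ≤ p*x^3 + (p^2/2) * (2*x^3) := by
          have hpp : (0:ℝ) ≤ p^2/2 := by positivity
          have h1 : p*e ≤ p*x^3 := mul_le_mul_of_nonneg_left heps hp0
          have h2 : (p^2/2)*|w^3 + w^4/4 + 2*w*ε + w^2*ε + ε^2| ≤ (p^2/2)*(2*x^3) :=
            mul_le_mul_of_nonneg_left hS hpp
          linarith
      _ ≤ 3 * p * x^3 := by
          have hx3 : (0:ℝ) ≤ x^3 := pow_nonneg hw0 3
          have hpsq : p^2 ≤ p := by nlinarith [mul_nonneg hp0 (sub_nonneg.mpr hp1)]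
          have h1 : p^2 * x^3 ≤ p * x^3 := mul_le_mul_of_nonneg_right hpsq hx3
          linarith [mul_nonneg hp0 hx3]
  calc |F p w - (p*w + p*(1-p)*w^2/2)|
      ≤ |Real.log (1+t) - (t - t^2/2)| + |t - t^2/2 - (p*w + p*(1-p)*w^2/2)| := by
        rw [hFt]; exact abs_sub_le _ _ _
    _ ≤ 2 * |t|^3 + 3 * p * x^3 := by linarith
    _ ≤ 19 * p * x^3 := by linarith

/-- For `y, z` in a compact set `[-R, R]` and `γ → 0`, uniformly in `p ∈ [0,1]`:
`(F(p,γ(z+y)) + F(p,γ(-z+y)))/2 = pγy + (1/2)p(1-p)γ²(z²+y²) + O(pγ³)`. -/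
theorem F_symmetric_combination_expansion (R : ℝ) (hR : 0 < R) :
    ∃ C > 0, ∃ γ₀ > 0, ∀ γ : ℝ, |γ| ≤ γ₀ →
      ∀ p ∈ Set.Icc (0 : ℝ) 1, ∀ y ∈ Set.Icc (-R) R, ∀ z ∈ Set.Icc (-R) R,
        |(F p (γ * (z + y)) + F p (γ * (-z + y))) / 2 -
            (p * γ * y + 1 / 2 * p * (1 - p) * γ ^ 2 * (z ^ 2 + y ^ 2))|
          ≤ C * p * |γ| ^ 3 := by
  refine ⟨152 * R^3, by positivity, 1/(10*R), by positivity, ?_⟩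
  intro γ hγ p hp y hy z hz
  obtain ⟨hp0, hp1⟩ := hp
  obtain ⟨hy1, hy2⟩ := hy
  obtain ⟨hz1, hz2⟩ := hz
  have hγ0 := abs_nonneg γ
  set w₁ := γ * (z + y) with hw₁
  set w₂ := γ * (-z + y) with hw₂
  have hb1 : |w₁| ≤ 2 * R * |γ| := by
    rw [hw₁, abs_mul]
    have : |z + y| ≤ 2 * R := by rw [abs_le]; constructor <;> linarith
    nlinarith
  have hb2 : |w₂| ≤ 2 * R * |γ| := by
    rw [hw₂, abs_mul]
    have : |(-z) + y| ≤ 2 * R := by rw [abs_le]; constructor <;> linarith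
    nlinarith
  have hsmall : 2 * R * |γ| ≤ 1/5 := by
    have h := mul_le_mul_of_nonneg_left hγ (by positivity : (0:ℝ) ≤ 2*R)
    calc 2 * R * |γ| ≤ 2 * R * (1/(10*R)) := h
      _ = 1/5 := by field_simp; ring
  have h1 := key p w₁ hp0 hp1 (hb1.trans hsmall)
  have h2 := key p w₂ hp0 hp1 (hb2.trans hsmall)
  have hcube1 : |w₁|^3 ≤ 8 * R^3 * |γ|^3 := by
    calc |w₁|^3 ≤ (2*R*|γ|)^3 := pow_le_pow_left₀ (abs_nonneg _) hb1 3
      _ = 8 * R^3 * |γ|^3 := by ring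
  have hcube2 : |w₂|^3 ≤ 8 * R^3 * |γ|^3 := by
    calc |w₂|^3 ≤ (2*R*|γ|)^3 := pow_le_pow_left₀ (abs_nonneg _) hb2 3
      _ = 8 * R^3 * |γ|^3 := by ring
  have hiden : (F p w₁ + F p w₂) / 2 -
      (p * γ * y + 1 / 2 * p * (1 - p) * γ ^ 2 * (z ^ 2 + y ^ 2))
      = ((F p w₁ - (p*w₁ + p*(1-p)*w₁^2/2)) + (F p w₂ - (p*w₂ + p*(1-p)*w₂^2/2))) / 2 := by
    rw [hw₁, hw₂]; ring
  rw [hiden]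
  calc |((F p w₁ - (p*w₁ + p*(1-p)*w₁^2/2)) + (F p w₂ - (p*w₂ + p*(1-p)*w₂^2/2))) / 2|
      ≤ (|F p w₁ - (p*w₁ + p*(1-p)*w₁^2/2)| + |F p w₂ - (p*w₂ + p*(1-p)*w₂^2/2)|) / 2 := by
        rw [abs_div, abs_of_nonneg (by norm_num : (0:ℝ) ≤ 2)]
        gcongr
        exact abs_add_le _ _
    _ ≤ (19 * p * |w₁|^3 + 19 * p * |w₂|^3) / 2 := by linarith
    _ ≤ (19 * p * (8 * R^3 * |γ|^3) + 19 * p * (8 * R^3 * |γ|^3)) / 2 := by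
        have h3 := mul_le_mul_of_nonneg_left hcube1 (by positivity : (0:ℝ) ≤ 19*p)
        have h4 := mul_le_mul_of_nonneg_left hcube2 (by positivity : (0:ℝ) ≤ 19*p)
        nlinarith
    _ = 152 * R^3 * p * |γ|^3 := by ring
end

section
/- With F(p,z) = log(1-p+p·e^z), for y, z in a compact subset of ℝ and γ → 0 one has (F(p,γ(z+y)) - F(p,γ(-z+y)))/2 = pγz + p(1-p)γ²zy + O(pγ³), uniformly in p ∈ [0,1]. -/
lemma E_bound (p t : ℝ) (hp0 : 0 ≤ p) (hp1 : p ≤ 1) (ht : |t| ≤ 1/4) :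
    |F p t - (p * t + p * (1 - p) * t ^ 2 / 2)| ≤ 18 * p * |t| ^ 3 := by
  have ht1 : |t| ≤ 1 := ht.trans (by norm_num)
  set u : ℝ := p * (Real.exp t - 1) with hu_def
  have h1 : |Real.exp t - 1| ≤ 2 * |t| := Real.abs_exp_sub_one_le ht1
  have hu : |u| ≤ 2 * p * |t| := by
    rw [hu_def, abs_mul, abs_of_nonneg hp0]
    calc p * |Real.exp t - 1| ≤ p * (2 * |t|) := mul_le_mul_of_nonneg_left h1 hp0
      _ = 2 * p * |t| := by ring
  have hu2 : |u| ≤ 1/2 := by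
    calc |u| ≤ 2 * p * |t| := hu
      _ ≤ 2 * 1 * (1/4) := by
          apply mul_le_mul _ ht (abs_nonneg _) (by norm_num)
          nlinarith
      _ = 1/2 := by norm_num
  have hF : F p t = Real.log (1 + u) := by
    unfold F; rw [hu_def]; congr 1; ring
  -- log bound
  have hA0 := Real.abs_log_sub_add_sum_range_le (x := -u) (by rw [abs_neg]; linarith) 2
  have hA : |Real.log (1 + u) - u + u ^ 2 / 2| ≤ 2 * |u| ^ 3 := by
    have e1 : (∑ i ∈ Finset.range 2, (-u) ^ (i + 1) / (i + 1)) + Real.log (1 - (-u))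
        = Real.log (1 + u) - u + u ^ 2 / 2 := by
      simp [Finset.sum_range_succ]; ring
    rw [e1, abs_neg] at hA0
    have h12 : (1:ℝ)/2 ≤ 1 - |u| := by linarith
    calc |Real.log (1 + u) - u + u ^ 2 / 2| ≤ |u| ^ (2+1) / (1 - |u|) := hA0
      _ ≤ |u| ^ 3 / (1/2) := by
          apply div_le_div_of_nonneg_left (by positivity) (by norm_num) h12
      _ = 2 * |u| ^ 3 := by ring
  -- exp bounds
  have hw : |Real.exp t - (1 + t + t ^ 2 / 2)| ≤ 2/9 * |t| ^ 3 := by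
    have := Real.exp_bound ht1 (n := 3) (by norm_num)
    have e2 : (∑ m ∈ Finset.range 3, t ^ m / m.factorial) = 1 + t + t ^ 2 / 2 := by
      simp [Finset.sum_range_succ, Nat.factorial]
    rw [e2] at this
    calc |Real.exp t - (1 + t + t ^ 2 / 2)| ≤ |t| ^ 3 * ((3:ℕ).succ / ((3:ℕ).factorial * 3)) := this
      _ = 2/9 * |t| ^ 3 := by norm_num [Nat.factorial]; ring
  have hsq : |p * t - u| ≤ p * t ^ 2 := by
    have h2 : |Real.exp t - 1 - t| ≤ t ^ 2 := Real.abs_exp_sub_one_sub_id_le ht1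
    have e3 : p * t - u = -(p * (Real.exp t - 1 - t)) := by rw [hu_def]; ring
    rw [e3, abs_neg, abs_mul, abs_of_nonneg hp0]
    exact mul_le_mul_of_nonneg_left h2 hp0
  have hsum : |p * t + u| ≤ 3 * p * |t| := by
    calc |p * t + u| ≤ |p * t| + |u| := abs_add_le _ _
      _ ≤ p * |t| + 2 * p * |t| := by
          rw [abs_mul, abs_of_nonneg hp0]; linarith
      _ = 3 * p * |t| := by ring
  -- identity
  have key : F p t - (p * t + p * (1 - p) * t ^ 2 / 2)
      = (Real.log (1 + u) - u + u ^ 2 / 2)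
        + p * (Real.exp t - (1 + t + t ^ 2 / 2))
        + (p * t - u) * (p * t + u) / 2 := by
    rw [hF, hu_def]; ring
  rw [key]
  have habs : |t| ^ 2 = t ^ 2 := sq_abs t
  have h3 : |(p * t - u) * (p * t + u) / 2| ≤ (3/2) * p ^ 2 * |t| ^ 3 := by
    rw [abs_div, abs_mul]
    have := mul_le_mul hsq hsum (abs_nonneg _) (by positivity)
    calc |p * t - u| * |p * t + u| / |(2:ℝ)|
        ≤ (p * t ^ 2) * (3 * p * |t|) / 2 := by
          rw [abs_of_nonneg (by norm_num : (0:ℝ) ≤ 2)]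
          exact div_le_div_of_nonneg_right this (by norm_num) |>.trans_eq rfl
      _ = (3/2) * p ^ 2 * (t ^ 2 * |t|) := by ring
      _ = (3/2) * p ^ 2 * |t| ^ 3 := by rw [← habs]; ring
  have h4 : |p * (Real.exp t - (1 + t + t ^ 2 / 2))| ≤ 2/9 * p * |t| ^ 3 := by
    rw [abs_mul, abs_of_nonneg hp0]
    calc p * |Real.exp t - (1 + t + t ^ 2 / 2)| ≤ p * (2/9 * |t| ^ 3) :=
          mul_le_mul_of_nonneg_left hw hp0
      _ = 2/9 * p * |t| ^ 3 := by ring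
  have h5 : 2 * |u| ^ 3 ≤ 16 * p * |t| ^ 3 := by
    have hc : |u| ^ 3 ≤ (2 * p * |t|) ^ 3 := pow_le_pow_left₀ (abs_nonneg _) hu 3
    have hp3 : p ^ 3 ≤ p := by nlinarith
    nlinarith [pow_nonneg (abs_nonneg t) 3, pow_nonneg (abs_nonneg u) 3]
  calc |(Real.log (1 + u) - u + u ^ 2 / 2)
        + p * (Real.exp t - (1 + t + t ^ 2 / 2))
        + (p * t - u) * (p * t + u) / 2|
      ≤ |Real.log (1 + u) - u + u ^ 2 / 2|
        + |p * (Real.exp t - (1 + t + t ^ 2 / 2))|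
        + |(p * t - u) * (p * t + u) / 2| := abs_add_three _ _ _
    _ ≤ 16 * p * |t| ^ 3 + 2/9 * p * |t| ^ 3 + (3/2) * p ^ 2 * |t| ^ 3 := by
        have := hA.trans h5
        linarith
    _ ≤ 18 * p * |t| ^ 3 := by
        have hpp : p ^ 2 * |t| ^ 3 ≤ p * |t| ^ 3 :=
          mul_le_mul_of_nonneg_right (by nlinarith) (pow_nonneg (abs_nonneg t) 3)
        have hnn : 0 ≤ p * |t| ^ 3 := by positivity
        linarith

/-- For `y, z` in a compact set `[-R, R]` and `γ → 0`, uniformly in `p ∈ [0,1]`: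
`(F(p,γ(z+y)) - F(p,γ(-z+y)))/2 = pγz + p(1-p)γ²zy + O(pγ³)`. -/
theorem F_antisymmetric_combination_expansion (R : ℝ) (hR : 0 < R) :
    ∃ C > 0, ∃ γ₀ > 0, ∀ γ : ℝ, |γ| ≤ γ₀ →
      ∀ p ∈ Set.Icc (0 : ℝ) 1, ∀ y ∈ Set.Icc (-R) R, ∀ z ∈ Set.Icc (-R) R,
        |(F p (γ * (z + y)) - F p (γ * (-z + y))) / 2 -
            (p * γ * z + p * (1 - p) * γ ^ 2 * z * y)|
          ≤ C * p * |γ| ^ 3 := by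
  refine ⟨144 * R ^ 3, by positivity, 1 / (8 * R), by positivity, ?_⟩
  intro γ hγ p hp y hy z hz
  obtain ⟨hp0, hp1⟩ := hp
  rw [Set.mem_Icc] at hy hz
  have hyR : |y| ≤ R := abs_le.mpr hy
  have hzR : |z| ≤ R := abs_le.mpr hz
  set a : ℝ := γ * (z + y) with ha_def
  set b : ℝ := γ * (-z + y) with hb_def
  have haR : |a| ≤ 2 * R * |γ| := by
    rw [ha_def, abs_mul]
    calc |γ| * |z + y| ≤ |γ| * (2 * R) := by
          have : |z + y| ≤ 2 * R := (abs_add_le _ _).trans (by linarith)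
          exact mul_le_mul_of_nonneg_left this (abs_nonneg _)
      _ = 2 * R * |γ| := by ring
  have hbR : |b| ≤ 2 * R * |γ| := by
    rw [hb_def, abs_mul]
    calc |γ| * |-z + y| ≤ |γ| * (2 * R) := by
          have : |-z + y| ≤ 2 * R := (abs_add_le _ _).trans (by rw [abs_neg]; linarith)
          exact mul_le_mul_of_nonneg_left this (abs_nonneg _)
      _ = 2 * R * |γ| := by ring
  have hγ4 : 2 * R * |γ| ≤ 1/4 := by
    have := mul_le_mul_of_nonneg_left hγ (by positivity : (0:ℝ) ≤ 2 * R)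
    calc 2 * R * |γ| ≤ 2 * R * (1 / (8 * R)) := this
      _ = 1/4 := by field_simp; ring
  have ha4 : |a| ≤ 1/4 := haR.trans hγ4
  have hb4 : |b| ≤ 1/4 := hbR.trans hγ4
  have hEa := E_bound p a hp0 hp1 ha4
  have hEb := E_bound p b hp0 hp1 hb4
  have ha3 : |a| ^ 3 ≤ 8 * R ^ 3 * |γ| ^ 3 := by
    calc |a| ^ 3 ≤ (2 * R * |γ|) ^ 3 := pow_le_pow_left₀ (abs_nonneg _) haR 3
      _ = 8 * R ^ 3 * |γ| ^ 3 := by ring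
  have hb3 : |b| ^ 3 ≤ 8 * R ^ 3 * |γ| ^ 3 := by
    calc |b| ^ 3 ≤ (2 * R * |γ|) ^ 3 := pow_le_pow_left₀ (abs_nonneg _) hbR 3
      _ = 8 * R ^ 3 * |γ| ^ 3 := by ring
  have key : (F p a - F p b) / 2 - (p * γ * z + p * (1 - p) * γ ^ 2 * z * y)
      = ((F p a - (p * a + p * (1 - p) * a ^ 2 / 2))
         - (F p b - (p * b + p * (1 - p) * b ^ 2 / 2))) / 2 := by
    rw [ha_def, hb_def]; ring
  rw [key]
  calc |((F p a - (p * a + p * (1 - p) * a ^ 2 / 2))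
         - (F p b - (p * b + p * (1 - p) * b ^ 2 / 2))) / 2|
      ≤ (|F p a - (p * a + p * (1 - p) * a ^ 2 / 2)|
         + |F p b - (p * b + p * (1 - p) * b ^ 2 / 2)|) / 2 := by
        rw [abs_div, abs_of_nonneg (by norm_num : (0:ℝ) ≤ 2)]
        exact div_le_div_of_nonneg_right (abs_sub _ _) (by norm_num)
    _ ≤ (18 * p * (8 * R ^ 3 * |γ| ^ 3) + 18 * p * (8 * R ^ 3 * |γ| ^ 3)) / 2 := by
        have h1 : 18 * p * |a| ^ 3 ≤ 18 * p * (8 * R ^ 3 * |γ| ^ 3) :=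
          mul_le_mul_of_nonneg_left ha3 (by positivity)
        have h2 : 18 * p * |b| ^ 3 ≤ 18 * p * (8 * R ^ 3 * |γ| ^ 3) :=
          mul_le_mul_of_nonneg_left hb3 (by positivity)
        have := hEa.trans h1
        have := hEb.trans h2
        linarith
    _ = 144 * R ^ 3 * p * |γ| ^ 3 := by ring
end

section
/- There exist constants 0 < c ≤ C such that for all N ≥ 1 and all integers k with |k| ≤ N and N+k even, c·N^{-1/2}·2^N·e^{-N·I(k/N) - λ_N(k)} ≤ C(N,(N+k)/2) ≤ C·N^{-1/2}·2^N·e^{-N·I(k/N) - λ_N(k)}, where λ_N(k) = (1/2)·log(((N+1)² - k²)/N²). -/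
open Real

noncomputable def rateI (x : ℝ) : ℝ :=
  (1 - x) / 2 * Real.log (1 - x) + (1 + x) / 2 * Real.log (1 + x)

noncomputable def lam (N : ℕ) (k : ℤ) : ℝ :=
  1 / 2 * Real.log ((((N : ℝ) + 1) ^ 2 - (k : ℝ) ^ 2) / (N : ℝ) ^ 2)


lemma stirling_lo_aux' (j : ℕ) : Real.sqrt Real.pi ≤ Stirling.stirlingSeq (j+1) := by
  have ht : Filter.Tendsto (Stirling.stirlingSeq ∘ Nat.succ) Filter.atTop (nhds (Real.sqrt Real.pi)) :=
    Stirling.tendsto_stirlingSeq_sqrt_pi.comp (Filter.tendsto_add_atTop_nat 1)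
  exact Stirling.stirlingSeq'_antitone.le_of_tendsto ht j

lemma stirling_bds (n : ℕ) (hn : 1 ≤ n) :
    (1.77 : ℝ) * (Real.sqrt (2*n) * ((n:ℝ) / Real.exp 1)^n) ≤ n.factorial ∧
    (n.factorial : ℝ) ≤ (1.93 : ℝ) * (Real.sqrt (2*n) * ((n:ℝ)/Real.exp 1)^n) := by
  obtain ⟨j, rfl⟩ : ∃ j, n = j + 1 := ⟨n - 1, by omega⟩
  have hpos : (0:ℝ) < Real.sqrt (2*((j+1:ℕ):ℝ)) * (((j+1:ℕ):ℝ) / Real.exp 1)^(j+1) := by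
    have : (0:ℝ) < ((j+1:ℕ):ℝ) := by positivity
    positivity
  have hlo := stirling_lo_aux' j
  have hhi : Stirling.stirlingSeq (j+1) ≤ Real.exp 1 / Real.sqrt 2 := by
    have := Stirling.stirlingSeq'_antitone (Nat.zero_le j)
    simpa using this
  have hπ : (1.77 : ℝ) ≤ Real.sqrt Real.pi := by
    have h2 : (1.77:ℝ)^2 ≤ Real.pi := by nlinarith [Real.pi_gt_d6]
    nlinarith [Real.sq_sqrt Real.pi_pos.le, Real.sqrt_nonneg Real.pi]
  have hK : Real.exp 1 / Real.sqrt 2 ≤ (1.93 : ℝ) := by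
    have h2 : (1.414:ℝ) ≤ Real.sqrt 2 := by
      nlinarith [Real.sq_sqrt (by norm_num : (0:ℝ) ≤ 2), Real.sqrt_nonneg 2]
    have he : Real.exp 1 ≤ 2.7182818286 := Real.exp_one_lt_d9.le
    rw [div_le_iff₀ (by positivity)]
    nlinarith
  have hdef : Stirling.stirlingSeq (j+1) = (j+1).factorial / (Real.sqrt (2*((j+1:ℕ):ℝ)) * (((j+1:ℕ):ℝ)/Real.exp 1)^(j+1)) := rfl
  rw [hdef, le_div_iff₀ hpos] at hlo
  rw [hdef, div_le_iff₀ hpos] at hhi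
  exact ⟨le_trans (mul_le_mul_of_nonneg_right hπ hpos.le) hlo,
    le_trans hhi (mul_le_mul_of_nonneg_right hK hpos.le)⟩

lemma const_mul_sqrt (c x : ℝ) (hc : 0 ≤ c) :
    c * Real.sqrt x = Real.sqrt (c^2 * x) := by
  rw [Real.sqrt_mul (sq_nonneg c), Real.sqrt_sq hc]

lemma key_lo (x y z q : ℝ) (hx : 0 ≤ x) (hq0 : 0 ≤ q)
    (hq1 : (2*y)*(2*z) ≤ q) :
    ((1/10 : ℝ)*1.93^2)^2 * (x * (2*y) * (2*z)) ≤ 1.77^2 * (2*x*q) := by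
  nlinarith [mul_le_mul_of_nonneg_left hq1 hx, mul_nonneg hx hq0]

lemma key_hi (x y z q : ℝ) (hx : 0 ≤ x) (hy : 1 ≤ y) (hz : 1 ≤ z)
    (hq : q = (2*y+1)*(2*z+1)) :
    (1.93:ℝ)^2 * (2*x*q) ≤ (2*1.77^2)^2 * (x * (2*y) * (2*z)) := by
  have hq2 : q ≤ (9/4) * ((2*y)*(2*z)) := by
    rw [hq]; nlinarith [mul_nonneg (sub_nonneg.mpr hy) (sub_nonneg.mpr hz)]
  nlinarith [mul_le_mul_of_nonneg_left hq2 (show (0:ℝ) ≤ 2*x by linarith),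
    mul_nonneg hx (mul_nonneg (show (0:ℝ) ≤ 2*y by linarith) (show (0:ℝ) ≤ 2*z by linarith))]

lemma q_lo (y z : ℝ) (hy : 0 ≤ y) (hz : 0 ≤ z) : (2*y)*(2*z) ≤ (2*y+1)*(2*z+1) := by
  nlinarith

lemma choose_bounds (N m m' : ℕ) (hm : 1 ≤ m) (hm' : 1 ≤ m') (hN : N = m + m') :
    (1/10 : ℝ) * (Real.sqrt N * ((N:ℝ)^m * (N:ℝ)^m') /
        (((m:ℝ)^m * (m':ℝ)^m') * Real.sqrt ((2*(m:ℝ)+1)*(2*(m':ℝ)+1))))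
      ≤ (N.choose m : ℝ) ∧
    (N.choose m : ℝ) ≤ 2 * (Real.sqrt N * ((N:ℝ)^m * (N:ℝ)^m') /
        (((m:ℝ)^m * (m':ℝ)^m') * Real.sqrt ((2*(m:ℝ)+1)*(2*(m':ℝ)+1)))) := by
  have hm0 : (0:ℝ) < m := by exact_mod_cast hm
  have hm'0 : (0:ℝ) < m' := by exact_mod_cast hm'
  have hN1 : 1 ≤ N := by omega
  have hN0 : (0:ℝ) < N := by exact_mod_cast hN1
  obtain ⟨g_lo, g_hi⟩ := stirling_bds N hN1
  obtain ⟨a_lo, a_hi⟩ := stirling_bds m hm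
  obtain ⟨b_lo, b_hi⟩ := stirling_bds m' hm'
  have he0 : (0:ℝ) < Real.exp 1 := Real.exp_pos 1
  obtain ⟨e, he⟩ : ∃ e : ℝ, e = Real.exp 1 := ⟨_, rfl⟩
  rw [← he] at g_lo g_hi a_lo a_hi b_lo b_hi
  obtain ⟨g, hg⟩ : ∃ g : ℝ, g = Real.sqrt (2*(N:ℝ)) * ((N:ℝ)/e)^N := ⟨_, rfl⟩
  obtain ⟨a, ha⟩ : ∃ a : ℝ, a = Real.sqrt (2*(m:ℝ)) * ((m:ℝ)/e)^m := ⟨_, rfl⟩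
  obtain ⟨b, hb⟩ : ∃ b : ℝ, b = Real.sqrt (2*(m':ℝ)) * ((m':ℝ)/e)^m' := ⟨_, rfl⟩
  rw [← hg] at g_lo g_hi
  rw [← ha] at a_lo a_hi
  rw [← hb] at b_lo b_hi
  have ga0 : 0 < g := by rw [hg, he]; positivity
  have aa0 : 0 < a := by rw [ha, he]; positivity
  have bb0 : 0 < b := by rw [hb, he]; positivity
  obtain ⟨q, hq⟩ : ∃ q : ℝ, q = (2*(m:ℝ)+1)*(2*(m':ℝ)+1) := ⟨_, rfl⟩
  have hq0 : (0:ℝ) < q := by rw [hq]; positivity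
  obtain ⟨A, hA⟩ : ∃ A : ℝ, A = (N:ℝ)^m * (N:ℝ)^m' := ⟨_, rfl⟩
  obtain ⟨P, hP⟩ : ∃ P : ℝ, P = (m:ℝ)^m * (m':ℝ)^m' := ⟨_, rfl⟩
  have hA0 : 0 < A := by rw [hA]; positivity
  have hP0 : 0 < P := by rw [hP]; positivity
  rw [← hA, ← hP, ← hq]
  have hD0 : (0:ℝ) < P * Real.sqrt q := mul_pos hP0 (Real.sqrt_pos.mpr hq0)
  have hch : (N.choose m : ℝ) * ((m.factorial : ℝ) * (m'.factorial : ℝ)) = (N.factorial : ℝ) := by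
    have h0 := Nat.choose_mul_factorial_mul_factorial (show m ≤ N by omega)
    rw [show N - m = m' from by omega] at h0
    rw [← h0]; push_cast; ring
  have hch0 : (0:ℝ) ≤ (N.choose m : ℝ) := by positivity
  -- scalar inequalities
  have hcast : (N:ℝ) = (m:ℝ) + (m':ℝ) := by rw [hN]; push_cast; ring
  have hsq_lo : (1/10 : ℝ) * (Real.sqrt N * Real.sqrt (2*(m:ℝ)) * Real.sqrt (2*(m':ℝ))) * 1.93^2
      ≤ 1.77 * (Real.sqrt (2*(N:ℝ)) * Real.sqrt q) := by
    have A1 : Real.sqrt (N:ℝ) * Real.sqrt (2*(m:ℝ)) * Real.sqrt (2*(m':ℝ))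
        = Real.sqrt ((N:ℝ) * (2*(m:ℝ)) * (2*(m':ℝ))) := by
      rw [← Real.sqrt_mul (show (0:ℝ) ≤ (N:ℝ) by positivity),
        ← Real.sqrt_mul (show (0:ℝ) ≤ (N:ℝ)*(2*(m:ℝ)) by positivity)]
    have A2 : Real.sqrt (2*(N:ℝ)) * Real.sqrt q = Real.sqrt (2*(N:ℝ)*q) := by
      rw [← Real.sqrt_mul (show (0:ℝ) ≤ 2*(N:ℝ) by positivity)]
    have hq1 : (2*(m:ℝ))*(2*(m':ℝ)) ≤ q := by rw [hq]; exact q_lo _ _ hm0.le hm'0.le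
    have hkey : ((1/10 : ℝ)*1.93^2)^2 * ((N:ℝ) * (2*(m:ℝ)) * (2*(m':ℝ))) ≤ 1.77^2 * (2*(N:ℝ)*q) :=
      key_lo _ _ _ _ hN0.le hq0.le hq1
    calc (1/10 : ℝ) * (Real.sqrt N * Real.sqrt (2*(m:ℝ)) * Real.sqrt (2*(m':ℝ))) * 1.93^2
        = ((1/10:ℝ)*1.93^2) * Real.sqrt ((N:ℝ) * (2*(m:ℝ)) * (2*(m':ℝ))) := by rw [A1]; ring
      _ = Real.sqrt (((1/10:ℝ)*1.93^2)^2 * ((N:ℝ) * (2*(m:ℝ)) * (2*(m':ℝ)))) :=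
          const_mul_sqrt _ _ (by norm_num)
      _ ≤ Real.sqrt (1.77^2 * (2*(N:ℝ)*q)) := Real.sqrt_le_sqrt hkey
      _ = 1.77 * Real.sqrt (2*(N:ℝ)*q) := (const_mul_sqrt _ _ (by norm_num)).symm
      _ = 1.77 * (Real.sqrt (2*(N:ℝ)) * Real.sqrt q) := by rw [A2]
  have hsq_hi : (1.93:ℝ) * (Real.sqrt (2*(N:ℝ)) * Real.sqrt q)
      ≤ 2 * (Real.sqrt N * Real.sqrt (2*(m:ℝ)) * Real.sqrt (2*(m':ℝ))) * 1.77^2 := by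
    have A1 : Real.sqrt (N:ℝ) * Real.sqrt (2*(m:ℝ)) * Real.sqrt (2*(m':ℝ))
        = Real.sqrt ((N:ℝ) * (2*(m:ℝ)) * (2*(m':ℝ))) := by
      rw [← Real.sqrt_mul (show (0:ℝ) ≤ (N:ℝ) by positivity),
        ← Real.sqrt_mul (show (0:ℝ) ≤ (N:ℝ)*(2*(m:ℝ)) by positivity)]
    have A2 : Real.sqrt (2*(N:ℝ)) * Real.sqrt q = Real.sqrt (2*(N:ℝ)*q) := by
      rw [← Real.sqrt_mul (show (0:ℝ) ≤ 2*(N:ℝ) by positivity)]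
    have hkey : (1.93:ℝ)^2 * (2*(N:ℝ)*q) ≤ (2*1.77^2)^2 * ((N:ℝ) * (2*(m:ℝ)) * (2*(m':ℝ))) :=
      key_hi _ _ _ _ hN0.le (by exact_mod_cast hm) (by exact_mod_cast hm') hq
    calc (1.93:ℝ) * (Real.sqrt (2*(N:ℝ)) * Real.sqrt q)
        = 1.93 * Real.sqrt (2*(N:ℝ)*q) := by rw [A2]
      _ = Real.sqrt ((1.93:ℝ)^2 * (2*(N:ℝ)*q)) := const_mul_sqrt _ _ (by norm_num)
      _ ≤ Real.sqrt ((2*1.77^2)^2 * ((N:ℝ) * (2*(m:ℝ)) * (2*(m':ℝ)))) := Real.sqrt_le_sqrt hkey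
      _ = (2*1.77^2) * Real.sqrt ((N:ℝ) * (2*(m:ℝ)) * (2*(m':ℝ))) := (const_mul_sqrt _ _ (by norm_num)).symm
      _ = 2 * (Real.sqrt N * Real.sqrt (2*(m:ℝ)) * Real.sqrt (2*(m':ℝ))) * 1.77^2 := by rw [A1]; ring
  -- product form
  have hrw : ∀ (x:ℝ) (n:ℕ), (x/e)^n = x^n * (e⁻¹)^n := by
    intro x n; rw [div_pow, div_eq_mul_inv, inv_pow]
  have hEmul : (e⁻¹)^m * (e⁻¹)^m' = (e⁻¹)^N := by rw [hN, pow_add]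
  have hNpow : (N:ℝ)^N = (N:ℝ)^m * (N:ℝ)^m' := by rw [hN, pow_add]
  have hE0 : (0:ℝ) ≤ (e⁻¹)^m * (e⁻¹)^m' := by rw [he]; positivity
  have main_lo : (1/10:ℝ) * (Real.sqrt N * A) * (1.93*a*(1.93*b)) ≤ (1.77*g) * (P * Real.sqrt q) := by
    have lhs_eq : (1/10:ℝ) * (Real.sqrt N * A) * (1.93*a*(1.93*b))
        = ((1/10:ℝ) * (Real.sqrt N * Real.sqrt (2*(m:ℝ)) * Real.sqrt (2*(m':ℝ))) * 1.93^2)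
          * (A * P * ((e⁻¹)^m * (e⁻¹)^m')) := by
      rw [ha, hb, hrw, hrw, hA, hP]; ring
    have rhs_eq : (1.77*g) * (P * Real.sqrt q)
        = (1.77 * (Real.sqrt (2*(N:ℝ)) * Real.sqrt q)) * (A * P * ((e⁻¹)^m * (e⁻¹)^m')) := by
      rw [hg, hrw, hEmul, hA, hP, hNpow]
      ring
    rw [lhs_eq, rhs_eq]
    exact mul_le_mul_of_nonneg_right hsq_lo (mul_nonneg (mul_nonneg hA0.le hP0.le) hE0)
  have main_hi : (1.93*g) * (P * Real.sqrt q) ≤ 2 * (Real.sqrt N * A) * (1.77*a*(1.77*b)) := by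
    have lhs_eq : (1.93*g) * (P * Real.sqrt q)
        = ((1.93:ℝ) * (Real.sqrt (2*(N:ℝ)) * Real.sqrt q)) * (A * P * ((e⁻¹)^m * (e⁻¹)^m')) := by
      rw [hg, hrw, hEmul, hA, hP, hNpow]; ring
    have rhs_eq : 2 * (Real.sqrt N * A) * (1.77*a*(1.77*b))
        = (2 * (Real.sqrt N * Real.sqrt (2*(m:ℝ)) * Real.sqrt (2*(m':ℝ))) * 1.77^2)
          * (A * P * ((e⁻¹)^m * (e⁻¹)^m')) := by
      rw [ha, hb, hrw, hrw, hA, hP]; ring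
    rw [lhs_eq, rhs_eq]
    exact mul_le_mul_of_nonneg_right hsq_hi (mul_nonneg (mul_nonneg hA0.le hP0.le) hE0)
  constructor
  · rw [mul_div_assoc']
    rw [div_le_iff₀ hD0]
    have hcancel : (0:ℝ) < 1.93*a*(1.93*b) :=
      mul_pos (mul_pos (by norm_num) aa0) (mul_pos (by norm_num) bb0)
    refine le_of_mul_le_mul_right ?_ hcancel
    calc (1/10:ℝ) * (Real.sqrt N * A) * (1.93*a*(1.93*b))
        ≤ (1.77*g) * (P * Real.sqrt q) := main_lo
      _ ≤ (N.factorial : ℝ) * (P * Real.sqrt q) := mul_le_mul_of_nonneg_right g_lo hD0.le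
      _ = ((N.choose m : ℝ) * ((m.factorial:ℝ) * (m'.factorial:ℝ))) * (P * Real.sqrt q) := by
          rw [hch]
      _ ≤ ((N.choose m : ℝ) * ((1.93*a) * (1.93*b))) * (P * Real.sqrt q) := by
          refine mul_le_mul_of_nonneg_right (mul_le_mul_of_nonneg_left ?_ hch0) hD0.le
          exact mul_le_mul a_hi b_hi (by positivity) (le_of_lt (mul_pos (by norm_num) aa0))
      _ = (N.choose m : ℝ) * (P * Real.sqrt q) * (1.93*a*(1.93*b)) := by ring
  · rw [mul_div_assoc']
    rw [le_div_iff₀ hD0]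
    have hcancel : (0:ℝ) < 1.77*a*(1.77*b) :=
      mul_pos (mul_pos (by norm_num) aa0) (mul_pos (by norm_num) bb0)
    refine le_of_mul_le_mul_right ?_ hcancel
    calc (N.choose m : ℝ) * (P * Real.sqrt q) * (1.77*a*(1.77*b))
        = ((N.choose m : ℝ) * ((1.77*a) * (1.77*b))) * (P * Real.sqrt q) := by ring
      _ ≤ ((N.choose m : ℝ) * ((m.factorial:ℝ) * (m'.factorial:ℝ))) * (P * Real.sqrt q) := by
          refine mul_le_mul_of_nonneg_right (mul_le_mul_of_nonneg_left ?_ hch0) hD0.le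
          exact mul_le_mul a_lo b_lo (le_of_lt (mul_pos (by norm_num) bb0)) (by positivity)
      _ = (N.factorial : ℝ) * (P * Real.sqrt q) := by rw [hch]
      _ ≤ (1.93*g) * (P * Real.sqrt q) := mul_le_mul_of_nonneg_right g_hi hD0.le
      _ ≤ 2 * (Real.sqrt N * A) * (1.77*a*(1.77*b)) := main_hi



lemma exp_helper (a : ℕ) (b : ℝ) (h : 0 < b ∨ a = 0) :
    Real.exp (-(a:ℝ) * Real.log b) = (b⁻¹)^a := by
  rcases h with hb | rfl
  · rw [show -(a:ℝ) * Real.log b = (a:ℝ) * Real.log b⁻¹ by rw [Real.log_inv]; ring]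
    rw [Real.exp_nat_mul, Real.exp_log (inv_pos.mpr hb)]
  · simp

lemma alg_helper (s sq xm xm' pm pm' tm tm' x : ℝ) (hs : s ≠ 0) (hsq : sq ≠ 0)
    (hpm : pm ≠ 0) (hpm' : pm' ≠ 0) (htm : tm ≠ 0) (htm' : tm' ≠ 0)
    (hx : s * s = x) :
    s⁻¹ * (tm * tm') * (xm' / (tm' * pm') * (xm / (tm * pm)) * (x / sq))
      = s * (xm * xm') / ((pm * pm') * sq) := by
  rw [← hx]; field_simp

lemma target_eq (N m m' : ℕ) (hN : 1 ≤ N) (hsum : N = m + m') (k : ℤ)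
    (hk : (k:ℝ) = 2*(m:ℝ) - (N:ℝ)) :
    (N : ℝ) ^ (-(1 : ℝ) / 2) * 2 ^ N * Real.exp (-(N : ℝ) * rateI ((k : ℝ) / (N : ℝ)) - lam N k)
      = Real.sqrt N * ((N:ℝ)^m * (N:ℝ)^m') /
        (((m:ℝ)^m * (m':ℝ)^m') * Real.sqrt ((2*(m:ℝ)+1)*(2*(m':ℝ)+1))) := by
  have hN0 : (0:ℝ) < N := by exact_mod_cast hN
  have hNcast : (N:ℝ) = (m:ℝ) + (m':ℝ) := by exact_mod_cast congrArg (Nat.cast (R := ℝ)) hsum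
  have hNne : (N:ℝ) ≠ 0 := ne_of_gt hN0
  have hx1 : 1 - (k:ℝ)/N = 2*(m':ℝ)/N := by
    rw [hk, eq_div_iff hNne, sub_mul, one_mul, div_mul_cancel₀ _ hNne, hNcast]; ring
  have hx2 : 1 + (k:ℝ)/N = 2*(m:ℝ)/N := by
    rw [hk, eq_div_iff hNne, add_mul, one_mul, div_mul_cancel₀ _ hNne, hNcast]; ring
  have hrate : (N:ℝ) * rateI ((k:ℝ)/N) =
      (m':ℝ) * Real.log (2*(m':ℝ)/N) + (m:ℝ) * Real.log (2*(m:ℝ)/N) := by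
    rw [rateI, hx1, hx2]
    have e1 : (2*(m':ℝ)/N)/2 * (N:ℝ) = (m':ℝ) := by field_simp
    have e2 : (2*(m:ℝ)/N)/2 * (N:ℝ) = (m:ℝ) := by field_simp
    calc (N:ℝ) * (2*(m':ℝ)/N/2 * Real.log (2*(m':ℝ)/N) + 2*(m:ℝ)/N/2 * Real.log (2*(m:ℝ)/N))
        = ((2*(m':ℝ)/N)/2 * (N:ℝ)) * Real.log (2*(m':ℝ)/N)
          + ((2*(m:ℝ)/N)/2 * (N:ℝ)) * Real.log (2*(m:ℝ)/N) := by ring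
      _ = _ := by rw [e1, e2]
  set q : ℝ := (2*(m:ℝ)+1)*(2*(m':ℝ)+1) with hq
  have hq0 : 0 < q := by positivity
  have hQ : (((N:ℝ)+1)^2 - (k:ℝ)^2) = q := by rw [hk, hNcast, hq]; ring
  have hsq : Real.sqrt q ≠ 0 := ne_of_gt (Real.sqrt_pos.mpr hq0)
  have hlam : Real.exp (-lam N k) = (N:ℝ) / Real.sqrt q := by
    rw [lam, hQ]
    have h1 : -(1/2 * Real.log (q / (N:ℝ)^2)) = 1/2 * Real.log ((N:ℝ)^2 / q) := by
      rw [show (N:ℝ)^2/q = (q/(N:ℝ)^2)⁻¹ by field_simp, Real.log_inv]; ring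
    rw [h1, show (1:ℝ)/2 * Real.log ((N:ℝ)^2 / q) = Real.log ((N:ℝ)^2/q) * (1/2) by ring,
      ← Real.rpow_def_of_pos (by positivity), ← Real.sqrt_eq_rpow,
      Real.sqrt_div (by positivity) q, Real.sqrt_sq hN0.le]
  have hsplit : Real.exp (-(N : ℝ) * rateI ((k : ℝ) / (N : ℝ)) - lam N k)
      = ((2*(m':ℝ)/N)⁻¹)^m' * ((2*(m:ℝ)/N)⁻¹)^m * ((N:ℝ)/Real.sqrt q) := by
    rw [show -(N : ℝ) * rateI ((k : ℝ) / (N : ℝ)) - lam N k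
        = (-(m':ℝ) * Real.log (2*(m':ℝ)/N)) + ((-(m:ℝ) * Real.log (2*(m:ℝ)/N)) + (- lam N k)) by
          rw [show -(N : ℝ) * rateI ((k : ℝ) / (N : ℝ)) = -((N:ℝ) * rateI ((k:ℝ)/N)) by ring, hrate]; ring,
      Real.exp_add, Real.exp_add, hlam,
      exp_helper m' _ (by rcases Nat.eq_zero_or_pos m' with h|h
                          · right; exact h
                          · left
                            have : (0:ℝ) < m' := by exact_mod_cast h
                            positivity),
      exp_helper m _ (by rcases Nat.eq_zero_or_pos m with h|h
                         · right; exact h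
                         · left
                           have : (0:ℝ) < m := by exact_mod_cast h
                           positivity)]
    ring
  have hinv1 : ((2*(m':ℝ)/N)⁻¹)^m' = (N:ℝ)^m' / (2^m' * (m':ℝ)^m') := by
    rw [inv_div, div_pow, mul_pow]
  have hinv2 : ((2*(m:ℝ)/N)⁻¹)^m = (N:ℝ)^m / (2^m * (m:ℝ)^m) := by
    rw [inv_div, div_pow, mul_pow]
  have hrpow : (N:ℝ)^(-(1:ℝ)/2) = (Real.sqrt N)⁻¹ := by
    rw [neg_div, Real.rpow_neg hN0.le, ← Real.sqrt_eq_rpow]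
  have hsN : Real.sqrt (N:ℝ) ≠ 0 := ne_of_gt (Real.sqrt_pos.mpr hN0)
  have hpm : ((m:ℝ))^m ≠ 0 := by
    rcases Nat.eq_zero_or_pos m with h|h
    · subst h; norm_num
    · have : (0:ℝ) < m := by exact_mod_cast h
      positivity
  have hpm' : ((m':ℝ))^m' ≠ 0 := by
    rcases Nat.eq_zero_or_pos m' with h|h
    · subst h; norm_num
    · have : (0:ℝ) < m' := by exact_mod_cast h
      positivity
  rw [hsplit, hinv1, hinv2, hrpow, show (2:ℝ)^N = 2^m*2^m' by rw [hsum, pow_add]]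
  exact alg_helper _ _ _ _ _ _ _ _ _ hsN hsq hpm hpm' (by positivity) (by positivity)
    (Real.mul_self_sqrt hN0.le)



lemma const_mul_sqrt' (c x : ℝ) (hc : 0 ≤ c) :
    c * Real.sqrt x = Real.sqrt (c^2 * x) := by
  rw [Real.sqrt_mul (sq_nonneg c), Real.sqrt_sq hc]

lemma edge_bound (N : ℕ) (hN : 1 ≤ N) :
    (1/10:ℝ) * (Real.sqrt N / Real.sqrt (2*(N:ℝ)+1)) ≤ 1 ∧
    (1:ℝ) ≤ 2 * (Real.sqrt N / Real.sqrt (2*(N:ℝ)+1)) := by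
  have hN0 : (0:ℝ) < N := by exact_mod_cast hN
  have hN1 : (1:ℝ) ≤ N := by exact_mod_cast hN
  have hs0 : (0:ℝ) < Real.sqrt (2*(N:ℝ)+1) := Real.sqrt_pos.mpr (by linarith)
  constructor
  · have h1 : Real.sqrt (N:ℝ) ≤ Real.sqrt (2*(N:ℝ)+1) := Real.sqrt_le_sqrt (by linarith)
    have : Real.sqrt (N:ℝ) / Real.sqrt (2*(N:ℝ)+1) ≤ 1 := by
      rw [div_le_one hs0]; exact h1
    linarith [Real.sqrt_nonneg (N:ℝ), div_nonneg (Real.sqrt_nonneg (N:ℝ)) hs0.le]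
  · rw [mul_div_assoc', le_div_iff₀ hs0, one_mul]
    calc Real.sqrt (2*(N:ℝ)+1) ≤ Real.sqrt (2^2*(N:ℝ)) := Real.sqrt_le_sqrt (by linarith)
      _ = 2 * Real.sqrt (N:ℝ) := (const_mul_sqrt' 2 _ (by norm_num)).symm

lemma edge_case_m0 (N mz : ℕ) (hN : 1 ≤ N) (hz : mz = 0) :
    (1/10:ℝ) * (Real.sqrt N * ((N:ℝ)^mz * (N:ℝ)^N) /
        (((mz:ℝ)^mz * (N:ℝ)^N) * Real.sqrt ((2*(mz:ℝ)+1)*(2*(N:ℝ)+1))))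
      ≤ (N.choose mz : ℝ) ∧
    (N.choose mz : ℝ) ≤ 2 * (Real.sqrt N * ((N:ℝ)^mz * (N:ℝ)^N) /
        (((mz:ℝ)^mz * (N:ℝ)^N) * Real.sqrt ((2*(mz:ℝ)+1)*(2*(N:ℝ)+1)))) := by
  subst hz
  have hN0 : (0:ℝ) < N := by exact_mod_cast hN
  have hNN : ((N:ℝ))^N ≠ 0 := pow_ne_zero _ (ne_of_gt hN0)
  have hs0 : Real.sqrt (2*(N:ℝ)+1) ≠ 0 := ne_of_gt (Real.sqrt_pos.mpr (by linarith))
  have heq : Real.sqrt (N:ℝ) * ((N:ℝ)^(0:ℕ) * (N:ℝ)^N) /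
        ((((0:ℕ):ℝ)^(0:ℕ) * (N:ℝ)^N) * Real.sqrt ((2*((0:ℕ):ℝ)+1)*(2*(N:ℝ)+1)))
      = Real.sqrt N / Real.sqrt (2*(N:ℝ)+1) := by
    norm_num
    field_simp
  rw [heq]
  simpa using edge_bound N hN

lemma edge_case_m'0 (N mz : ℕ) (hN : 1 ≤ N) (hz : mz = 0) :
    (1/10:ℝ) * (Real.sqrt N * ((N:ℝ)^N * (N:ℝ)^mz) /
        (((N:ℝ)^N * (mz:ℝ)^mz) * Real.sqrt ((2*(N:ℝ)+1)*(2*(mz:ℝ)+1))))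
      ≤ (N.choose N : ℝ) ∧
    (N.choose N : ℝ) ≤ 2 * (Real.sqrt N * ((N:ℝ)^N * (N:ℝ)^mz) /
        (((N:ℝ)^N * (mz:ℝ)^mz) * Real.sqrt ((2*(N:ℝ)+1)*(2*(mz:ℝ)+1)))) := by
  subst hz
  have hN0 : (0:ℝ) < N := by exact_mod_cast hN
  have hNN : ((N:ℝ))^N ≠ 0 := pow_ne_zero _ (ne_of_gt hN0)
  have hs0 : Real.sqrt (2*(N:ℝ)+1) ≠ 0 := ne_of_gt (Real.sqrt_pos.mpr (by linarith))
  have heq : Real.sqrt (N:ℝ) * ((N:ℝ)^N * (N:ℝ)^(0:ℕ)) /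
        ((((N:ℝ))^N * ((0:ℕ):ℝ)^(0:ℕ)) * Real.sqrt ((2*(N:ℝ)+1)*(2*((0:ℕ):ℝ)+1)))
      = Real.sqrt N / Real.sqrt (2*(N:ℝ)+1) := by
    norm_num
    field_simp
  rw [heq]
  simpa using edge_bound N hN


/-- Uniform Stirling-type estimate: there are constants `0 < c ≤ C` with
`c N^{-1/2} 2^N e^{-N I(k/N) - λ_N(k)} ≤ C(N,(N+k)/2) ≤ C N^{-1/2} 2^N e^{-N I(k/N) - λ_N(k)}`
for all `N ≥ 1` and `|k| ≤ N` with `N + k` even. -/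
theorem choose_two_sided_stirling :
    ∃ c > (0 : ℝ), ∃ C ≥ c, ∀ N : ℕ, 1 ≤ N → ∀ k : ℤ, |k| ≤ (N : ℤ) →
      (2 : ℤ) ∣ (N : ℤ) + k →
        c * (N : ℝ) ^ (-(1 : ℝ) / 2) * 2 ^ N *
            Real.exp (-(N : ℝ) * rateI ((k : ℝ) / (N : ℝ)) - lam N k)
          ≤ (N.choose (((N : ℤ) + k) / 2).toNat : ℝ) ∧
        (N.choose (((N : ℤ) + k) / 2).toNat : ℝ) ≤
          C * (N : ℝ) ^ (-(1 : ℝ) / 2) * 2 ^ N *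
            Real.exp (-(N : ℝ) * rateI ((k : ℝ) / (N : ℝ)) - lam N k) := by
  refine ⟨1/10, by norm_num, 2, by norm_num, ?_⟩
  intro N hN k hk hdvd
  have habs := abs_le.mp hk
  have hm2 : (N:ℤ) + k = 2 * ((((N:ℤ)+k)/2).toNat : ℤ) := by omega
  set m : ℕ := (((N:ℤ)+k)/2).toNat with hmdef
  have hmN : m ≤ N := by omega
  set m' : ℕ := N - m with hm'def
  have hsum : N = m + m' := by omega
  have hkR : (k:ℝ) = 2*(m:ℝ) - (N:ℝ) := by
    have h : k = 2*(m:ℤ) - N := by omega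
    rw [h]; push_cast; ring
  have htq := target_eq N m m' hN hsum k hkR
  have key : ∀ r : ℝ, r * (N : ℝ) ^ (-(1 : ℝ) / 2) * 2 ^ N *
      Real.exp (-(N : ℝ) * rateI ((k : ℝ) / (N : ℝ)) - lam N k)
      = r * (Real.sqrt N * ((N:ℝ)^m * (N:ℝ)^m') /
        (((m:ℝ)^m * (m':ℝ)^m') * Real.sqrt ((2*(m:ℝ)+1)*(2*(m':ℝ)+1)))) := by
    intro r; rw [← htq]; ring
  rw [key (1/10), key 2]
  rcases Nat.eq_zero_or_pos m with hm0 | hm0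
  · have hm'N : m' = N := by omega
    rw [hm0, hm'N]
    exact edge_case_m0 N 0 hN rfl
  rcases Nat.eq_zero_or_pos m' with hm'0 | hm'0
  · have hmN' : m = N := by omega
    rw [hm'0, hmN']
    exact edge_case_m'0 N 0 hN rfl
  · exact choose_bounds N m m' hm0 hm'0 hsum
end

section
/- Let N ≥ 1 and let k, l, n be reals with |k| < N and |l±n| ≤ N±k (so that l/N is a convex combination of (l+n)/(N+k) and (l-n)/(N-k) with weights (N+k)/(2N) and (N-k)/(2N)). Then N·[((N+k)/(2N))·I((l+n)/(N+k)) + ((N-k)/(2N))·I((l-n)/(N-k)) - I(l/N)] ≥ (1/2)·(Nn - lk)²/(N(N² - k²)). -/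
open Real Set

lemma rateI_eq_mul_log : rateI = fun x => ((1 - x) * log (1 - x) + (1 + x) * log (1 + x)) / 2 := by
  funext x; unfold rateI; ring

lemma continuous_rateI : Continuous rateI := by
  rw [rateI_eq_mul_log]
  exact ((continuous_mul_log.comp (continuous_const.sub continuous_id)).add
    (continuous_mul_log.comp (continuous_const.add continuous_id))).div_const 2

lemma hasDerivAt_rateI {x : ℝ} (hx : x ∈ Ioo (-1 : ℝ) 1) :
    HasDerivAt rateI ((log (1 + x) - log (1 - x)) / 2) x := by
  have hminus := (hasDerivAt_mul_log (by linarith [hx.2] : (1 - x) ≠ 0)).comp x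
    ((hasDerivAt_id x).const_sub 1)
  have hplus := (hasDerivAt_mul_log (by linarith [hx.1] : (1 + x) ≠ 0)).comp x
    ((hasDerivAt_id x).const_add 1)
  rw [rateI_eq_mul_log]
  exact ((hminus.add hplus).div_const 2).congr_deriv (by ring)

lemma hasDerivAt_half_log_one_add_sub_log_one_sub {x : ℝ} (hx : x ∈ Ioo (-1 : ℝ) 1) :
    HasDerivAt (fun y => (log (1 + y) - log (1 - y)) / 2) (1 / (1 - x ^ 2)) x := by
  have h1x : 1 - x ≠ 0 := by linarith [hx.2]
  have h2x : 1 + x ≠ 0 := by linarith [hx.1]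
  have hminus := ((hasDerivAt_id x).const_sub 1).log h1x
  have hplus := ((hasDerivAt_id x).const_add 1).log h2x
  refine ((hplus.sub hminus).div_const 2).congr_deriv ?_
  rw [show 1 - x ^ 2 = (1 - x) * (1 + x) by ring]
  simp only [id]
  field_simp
  ring

theorem strongConvexOn_rateI : StrongConvexOn (Icc (-1 : ℝ) 1) 1 rateI := by
  rw [strongConvexOn_iff_convex]
  simp only [Real.norm_eq_abs, sq_abs]
  refine convexOn_of_hasDerivWithinAt2_nonneg (convex_Icc _ _)
    (f' := fun x => (log (1 + x) - log (1 - x)) / 2 - x) (f'' := fun x => 1 / (1 - x ^ 2) - 1)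
    (continuous_rateI.sub (by fun_prop)).continuousOn ?_ ?_ ?_
    <;> rw [interior_Icc] <;> intro x hx
  · exact ((hasDerivAt_rateI hx).sub (by simpa using (hasDerivAt_pow 2 x).const_mul (1 / 2 : ℝ)))
      |>.hasDerivWithinAt
  · exact ((hasDerivAt_half_log_one_add_sub_log_one_sub hx).sub (hasDerivAt_id x))
      |>.hasDerivWithinAt
  · have hpos : 0 < 1 - x ^ 2 := by nlinarith [hx.1, hx.2]
    have hle : 1 - x ^ 2 ≤ 1 := by nlinarith
    simpa using one_le_one_div hpos hle

lemma div_mem_Icc_neg_one_one {x y : ℝ} (hy : 0 < y) (hxy : |x| ≤ y) : x / y ∈ Icc (-1 : ℝ) 1 := by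
  rw [mem_Icc, ← abs_le, abs_div, abs_of_pos hy]
  exact div_le_one_of_le₀ hxy hy.le

theorem rateI_convexity_excess_general (N k l n : ℝ) (hk : |k| < N)
    (h1 : |l + n| ≤ N + k) (h2 : |l - n| ≤ N - k) :
    (N : ℝ) * ((N + k) / (2 * N) * rateI ((l + n) / (N + k))
        + (N - k) / (2 * N) * rateI ((l - n) / (N - k)) - rateI (l / N))
      ≥ 1 / 2 * (N * n - l * k) ^ 2 / (N * (N ^ 2 - k ^ 2)) := by
  obtain ⟨hk1, hk2⟩ := abs_lt.mp hk
  have hN : 0 < N := by linarith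
  have hNk1 : 0 < N + k := by linarith
  have hNk2 : 0 < N - k := by linarith
  have hexcess := strongConvexOn_rateI.2
    (div_mem_Icc_neg_one_one hNk1 h1) (div_mem_Icc_neg_one_one hNk2 h2)
    (div_nonneg hNk1.le (by positivity) : 0 ≤ (N + k) / (2 * N))
    (div_nonneg hNk2.le (by positivity) : 0 ≤ (N - k) / (2 * N)) (by field_simp; ring)
  have hmean : (N + k) / (2 * N) * ((l + n) / (N + k))
      + (N - k) / (2 * N) * ((l - n) / (N - k)) = l / N := by
    field_simp; ring
  simp only [smul_eq_mul, hmean, Real.norm_eq_abs, sq_abs] at hexcess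
  calc 1 / 2 * (N * n - l * k) ^ 2 / (N * (N ^ 2 - k ^ 2))
      = N * ((N + k) / (2 * N) * ((N - k) / (2 * N))
          * (1 / 2 * ((l + n) / (N + k) - (l - n) / (N - k)) ^ 2)) := by
        rw [show N ^ 2 - k ^ 2 = (N + k) * (N - k) by ring]
        field_simp
        ring
    _ ≤ _ := by gcongr; linarith

/-- Convexity excess bound for `I`: if `|k| < N`, `|l+n| ≤ N+k` and `|l-n| ≤ N-k`, then
`N[((N+k)/2N) I((l+n)/(N+k)) + ((N-k)/2N) I((l-n)/(N-k)) - I(l/N)]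
  ≥ (1/2)(Nn - lk)²/(N(N² - k²))`. -/
theorem rateI_convexity_excess (N k l n : ℝ) (hN : 1 ≤ N) (hk : |k| < N)
    (h1 : |l + n| ≤ N + k) (h2 : |l - n| ≤ N - k) :
    (N : ℝ) * ((N + k) / (2 * N) * rateI ((l + n) / (N + k))
        + (N - k) / (2 * N) * rateI ((l - n) / (N - k)) - rateI (l / N))
      ≥ 1 / 2 * (N * n - l * k) ^ 2 / (N * (N ^ 2 - k ^ 2)) :=
  rateI_convexity_excess_general N k l n hk h1 h2
end

section
/- For every β > 0 and h > 0, the equation z = tanh(β(z+h)) has a largest solution m⁺(β,h) ∈ (0,1), and at this solution 1 - β(1 - m⁺(β,h)²) > 0, so that σ²(β,h) := (1 - m⁺(β,h)²)/(1 - β(1 - m⁺(β,h)²)) > 0. -/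
/-!
The map `f z = tanh (β * (z + h))` is continuous with values in `(-1, 1)` and `f 0 > 0`, so its
fixed points form a nonempty closed set bounded by `1`; its supremum `m` is the largest fixed
point, and `m > 0`. On `[0, ∞)` the derivative `f' = β (1 - f²)` is decreasing, because `f` is
positive and increasing there. The mean value theorem on `[0, m]` gives `c` with
`f' c = (m - f 0) / m < 1`, hence `β (1 - m²) = f' m ≤ f' c < 1`.
-/

open Function Set

namespace Real

theorem hasDerivAt_tanh (x : ℝ) : HasDerivAt tanh (1 - tanh x ^ 2) x := by
  have key := (hasDerivAt_sinh x).div (hasDerivAt_cosh x) (cosh_pos x).ne'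
  have hderiv : (cosh x * cosh x - sinh x * sinh x) / cosh x ^ 2 = 1 - tanh x ^ 2 := by
    rw [tanh_eq_sinh_div_cosh]
    field_simp
  exact (key.congr_deriv hderiv).congr_of_eventuallyEq
    (Filter.Eventually.of_forall tanh_eq_sinh_div_cosh)

@[fun_prop]
theorem continuous_tanh : Continuous tanh :=
  continuous_iff_continuousAt.2 fun x ↦ (hasDerivAt_tanh x).continuousAt

theorem tanh_strictMono : StrictMono tanh :=
  strictMono_of_deriv_pos fun x ↦ by
    rw [(hasDerivAt_tanh x).deriv]
    linarith [tanh_sq_lt_one x]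

theorem tanh_pos {x : ℝ} (hx : 0 < x) : 0 < tanh x := by
  simpa using tanh_strictMono hx

end Real

open Real

theorem exists_isGreatest_fixedPoints {f : ℝ → ℝ} (hf : Continuous f) {a B : ℝ}
    (ha : a < f a) (hB : ∀ z, f z ≤ B) : ∃ m, IsGreatest (fixedPoints f) m ∧ a < m := by
  obtain ⟨z, ⟨haz, -⟩, hz⟩ : ∃ z ∈ Icc a (max a B), f z - z = 0 :=
    intermediate_value_Icc' (le_max_left a B) (by fun_prop)
      ⟨by linarith [hB (max a B), le_max_right a B], by linarith⟩
  have hzfix : IsFixedPt f z := sub_eq_zero.1 hz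
  have hbdd : BddAbove (fixedPoints f) := ⟨B, fun y (hy : f y = y) ↦ hy ▸ hB y⟩
  refine ⟨sSup (fixedPoints f), ⟨(isClosed_fixedPoints hf).csSup_mem ⟨z, hzfix⟩ hbdd,
    fun y hy ↦ le_csSup hbdd hy⟩, ?_⟩
  have haz' : a ≠ z := by rintro rfl; exact ha.ne' hzfix
  exact (lt_of_le_of_ne haz haz').trans_le (le_csSup hbdd hzfix)

theorem lt_one_of_isFixedPt_of_antitoneOn_deriv {f f' : ℝ → ℝ} {a m : ℝ} (ham : a < m)
    (hf : ∀ x ∈ Icc a m, HasDerivAt f (f' x) x) (hf' : AntitoneOn f' (Icc a m))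
    (ha : a < f a) (hm : IsFixedPt f m) : f' m < 1 := by
  obtain ⟨c, hc, hslope⟩ := exists_hasDerivAt_eq_slope f f' ham
    (fun x hx ↦ (hf x hx).continuousAt.continuousWithinAt)
    (fun x hx ↦ hf x (Ioo_subset_Icc_self hx))
  calc f' m ≤ f' c := hf' (Ioo_subset_Icc_self hc) (right_mem_Icc.2 ham.le) hc.2.le
    _ = (f m - f a) / (m - a) := hslope
    _ < 1 := by
      rw [hm, div_lt_one (sub_pos.2 ham)]
      linarith

theorem hasDerivAt_tanh_mul_add (β h z : ℝ) :
    HasDerivAt (fun z ↦ tanh (β * (z + h))) (β * (1 - tanh (β * (z + h)) ^ 2)) z := by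
  have hinner : HasDerivAt (fun z ↦ β * (z + h)) β z := by
    simpa using ((hasDerivAt_id z).add_const h).const_mul β
  exact ((hasDerivAt_tanh _).comp z hinner).congr_deriv (mul_comm _ _)

theorem antitoneOn_mul_one_sub_tanh_sq {β h : ℝ} (hβ : 0 ≤ β) (hh : 0 ≤ h) :
    AntitoneOn (fun z ↦ β * (1 - tanh (β * (z + h)) ^ 2)) (Ici 0) := by
  intro x (hx : 0 ≤ x) y _ hxy
  have hnonneg : 0 ≤ tanh (β * (x + h)) := by
    simpa using tanh_strictMono.monotone (by positivity : 0 ≤ β * (x + h))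
  have hle : tanh (β * (x + h)) ≤ tanh (β * (y + h)) :=
    tanh_strictMono.monotone (by gcongr)
  dsimp only
  gcongr

/-- For `β > 0` and `h > 0`, the equation `z = tanh(β(z+h))` has a largest solution
`m⁺(β,h) ∈ (0,1)`, and at this solution `1 - β(1 - m²) > 0`, so that
`σ²(β,h) = (1-m²)/(1 - β(1-m²)) > 0`. -/
theorem curie_weiss_external_field_fixed_point (β h : ℝ) (hβ : 0 < β) (hh : 0 < h) :
    ∃ m ∈ Set.Ioo (0 : ℝ) 1,
      m = Real.tanh (β * (m + h)) ∧
      (∀ z : ℝ, z = Real.tanh (β * (z + h)) → z ≤ m) ∧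
      0 < 1 - β * (1 - m ^ 2) ∧
      0 < (1 - m ^ 2) / (1 - β * (1 - m ^ 2)) := by
  have hf0 : 0 < tanh (β * (0 + h)) := tanh_pos (by positivity)
  obtain ⟨m, ⟨hmfix, hmax⟩, hm0⟩ := exists_isGreatest_fixedPoints
    (f := fun z ↦ tanh (β * (z + h))) (by fun_prop) hf0 (fun z ↦ (tanh_lt_one _).le)
  replace hmfix : tanh (β * (m + h)) = m := hmfix
  have hm1 : m < 1 := hmfix ▸ tanh_lt_one _
  have hslope : β * (1 - m ^ 2) < 1 := by
    have := lt_one_of_isFixedPt_of_antitoneOn_deriv hm0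
      (fun x _ ↦ hasDerivAt_tanh_mul_add β h x)
      ((antitoneOn_mul_one_sub_tanh_sq hβ.le hh.le).mono Icc_subset_Ici_self) hf0 hmfix
    rwa [hmfix] at this
  have hvar : 0 < 1 - m ^ 2 := by nlinarith
  exact ⟨m, ⟨hm0, hm1⟩, hmfix.symm, fun z hz ↦ hmax hz.symm, sub_pos.2 hslope,
    div_pos hvar (sub_pos.2 hslope)⟩
end

section
/- Let g : ℝ → ℝ be continuous, bounded and nonnegative, let σ² > 0, and let κ_N → ∞ with κ_N = o(√N). Then the Riemann-type sums (2πNσ²)^{-1/2} ∑_{k} g((k - Nm)/√N)·exp(-(k-Nm)²/(2Nσ²)), where the sum is over integers k of fixed parity with |k - Nm| ≤ √N·κ_N, converge as N → ∞ (for any fixed m ∈ ℝ, with the sum over k ≡ N mod 2, i.e. spacing 2/√N, appropriately normalized by the spacing) to (2πσ²)^{-1/2}∫_ℝ g(x)e^{-x²/(2σ²)}dx. -/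
/-!
The normalized sum is the integral of the step function that is constant, equal to
`f ((k - c) / s)`, on each grid cell `[(k - c) / s, (k + 1 - c) / s)` of the window. As the mesh
`1 / s` shrinks and the window grows, these step functions converge pointwise to `f` by
continuity, and a Gaussian bound on `f` gives a single integrable envelope for all of them,
so dominated convergence applies.
-/

open Filter Real Topology MeasureTheory Set

noncomputable section

def riemannStep (f : ℝ → ℝ) (s c : ℝ) (a b : ℤ) (x : ℝ) : ℝ :=
  ∑ k ∈ Finset.Icc a b, (Ico ((k - c) / s) ((k + 1 - c) / s)).indicator (fun _ => f ((k - c) / s)) x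

variable {f : ℝ → ℝ} {s c : ℝ}

lemma measurable_riemannStep (a b : ℤ) : Measurable (riemannStep f s c a b) :=
  Finset.measurable_sum _ fun _ _ => measurable_const.indicator measurableSet_Ico

lemma integral_riemannStep (hs : 0 < s) (a b : ℤ) :
    ∫ x, riemannStep f s c a b x = s⁻¹ * ∑ k ∈ Finset.Icc a b, f ((k - c) / s) := by
  simp only [riemannStep]
  rw [integral_finsetSum _ fun k _ =>
    (integrable_indicator_iff measurableSet_Ico).2 (integrableOn_const measure_Ico_lt_top.ne),
    Finset.mul_sum]
  refine Finset.sum_congr rfl fun k _ => ?_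
  have hlen : ((k : ℝ) + 1 - c) / s - (k - c) / s = s⁻¹ := by field_simp; ring
  rw [integral_indicator_const _ measurableSet_Ico, Real.volume_real_Ico, hlen,
    max_eq_left (inv_nonneg.2 hs.le), smul_eq_mul]

lemma mem_Ico_grid_iff (hs : 0 < s) (x : ℝ) (k : ℤ) :
    x ∈ Ico ((k - c) / s) ((k + 1 - c) / s) ↔ ⌊s * x + c⌋ = k := by
  rw [mem_Ico, Int.floor_eq_iff, div_le_iff₀ hs, lt_div_iff₀ hs]
  constructor <;> rintro ⟨h₁, h₂⟩ <;> constructor <;> linarith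

lemma riemannStep_eq_ite (hs : 0 < s) (a b : ℤ) (x : ℝ) :
    riemannStep f s c a b x =
      if ⌊s * x + c⌋ ∈ Finset.Icc a b then f ((⌊s * x + c⌋ - c) / s) else 0 := by
  rw [riemannStep, ← Finset.sum_ite_eq (Finset.Icc a b) ⌊s * x + c⌋ fun k => f ((k - c) / s)]
  refine Finset.sum_congr rfl fun k _ => ?_
  by_cases hk : ⌊s * x + c⌋ = k
  · rw [if_pos hk, indicator_of_mem ((mem_Ico_grid_iff hs x k).2 hk)]
  · rw [if_neg hk, indicator_of_notMem fun hx => hk ((mem_Ico_grid_iff hs x k).1 hx)]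

lemma floor_grid_mem_Ioc (hs : 0 < s) (x : ℝ) :
    (⌊s * x + c⌋ - c) / s ∈ Ioc (x - s⁻¹) x := by
  have h₁ := Int.floor_le (s * x + c)
  have h₂ := Int.sub_one_lt_floor (s * x + c)
  rw [mem_Ioc, div_le_iff₀ hs, lt_div_iff₀ hs, sub_mul, inv_mul_cancel₀ hs.ne']
  constructor <;> linarith

lemma abs_riemannStep_le {h : ℝ → ℝ} (hfh : ∀ x y, |x - y| ≤ 1 → |f y| ≤ h x) (hs : 1 ≤ s)
    (a b : ℤ) (x : ℝ) : |riemannStep f s c a b x| ≤ h x := by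
  rw [riemannStep_eq_ite (by positivity)]
  split_ifs
  · obtain ⟨hlo, hhi⟩ := floor_grid_mem_Ioc (c := c) (by positivity) x
    refine hfh x _ (abs_le.2 ⟨by linarith, ?_⟩)
    linarith [inv_le_one_of_one_le₀ hs]
  · simpa using (abs_nonneg _).trans (hfh x x (by simp))

variable {ι : Type*} {l : Filter ι} {s c : ι → ℝ} {a b : ι → ℤ}

lemma tendsto_riemannStep (hf : Continuous f) (hs : Tendsto s l atTop)
    (ha : Tendsto (fun i => (a i - c i) / s i) l atBot)
    (hb : Tendsto (fun i => (b i - c i) / s i) l atTop) (x : ℝ) :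
    Tendsto (fun i => riemannStep f (s i) (c i) (a i) (b i) x) l (𝓝 (f x)) := by
  have hpos : ∀ᶠ i in l, 0 < s i := hs.eventually_gt_atTop 0
  have hgrid : Tendsto (fun i => (⌊s i * x + c i⌋ - c i) / s i) l (𝓝 x) := by
    have hlower : Tendsto (fun i => x - (s i)⁻¹) l (𝓝 x) := by
      simpa using tendsto_const_nhds.sub hs.inv_tendsto_atTop
    refine tendsto_of_tendsto_of_tendsto_of_le_of_le' hlower tendsto_const_nhds ?_ ?_ <;>
    filter_upwards [hpos] with i hi
    exacts [(floor_grid_mem_Ioc hi x).1.le, (floor_grid_mem_Ioc hi x).2]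
  refine (hf.continuousAt.tendsto.comp hgrid).congr' ?_
  filter_upwards [hpos, ha.eventually_le_atBot x, hb.eventually_ge_atTop x] with i hi hai hbi
  rw [div_le_iff₀ hi] at hai
  rw [le_div_iff₀ hi] at hbi
  have hmem : ⌊s i * x + c i⌋ ∈ Finset.Icc (a i) (b i) := by
    rw [Finset.mem_Icc, Int.le_floor, Int.floor_le_iff]
    constructor <;> linarith
  rw [Function.comp_apply, riemannStep_eq_ite hi, if_pos hmem]

theorem tendsto_riemann_sum [l.IsCountablyGenerated] {h : ℝ → ℝ} (hf : Continuous f)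
    (hh : Integrable h) (hfh : ∀ x y, |x - y| ≤ 1 → |f y| ≤ h x) (hs : Tendsto s l atTop)
    (ha : Tendsto (fun i => (a i - c i) / s i) l atBot)
    (hb : Tendsto (fun i => (b i - c i) / s i) l atTop) :
    Tendsto (fun i => (s i)⁻¹ * ∑ k ∈ Finset.Icc (a i) (b i), f ((k - c i) / s i)) l
      (𝓝 (∫ x, f x)) := by
  have hs₁ : ∀ᶠ i in l, 1 ≤ s i := hs.eventually_ge_atTop 1
  refine (tendsto_integral_filter_of_dominated_convergence h
    (Eventually.of_forall fun i => (measurable_riemannStep (a i) (b i)).aestronglyMeasurable)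
    (hs₁.mono fun i hi => ae_of_all _ (abs_riemannStep_le hfh hi (a i) (b i))) hh
    (ae_of_all _ (tendsto_riemannStep hf hs ha hb))).congr' ?_
  filter_upwards [hs₁] with i hi
  exact integral_riemannStep (by positivity) (a i) (b i)

lemma exp_neg_mul_sq_le {β x y : ℝ} (hβ : 0 ≤ β) (hxy : |x - y| ≤ 1) :
    Real.exp (-β * y ^ 2) ≤ Real.exp β * Real.exp (-(β / 2) * x ^ 2) := by
  rw [← Real.exp_add, Real.exp_le_exp]
  have : (x - y) ^ 2 ≤ 1 := (sq_le_one_iff_abs_le_one _).2 hxy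
  -- `x² ≤ 2 y² + 2 (x - y)²`
  nlinarith [sq_nonneg (x - 2 * y)]

theorem tendsto_riemann_sum_of_abs_le_gaussian [l.IsCountablyGenerated] (hf : Continuous f)
    {C β : ℝ} (hβ : 0 < β) (hfC : ∀ x, |f x| ≤ C * Real.exp (-β * x ^ 2))
    (hs : Tendsto s l atTop) (ha : Tendsto (fun i => (a i - c i) / s i) l atBot)
    (hb : Tendsto (fun i => (b i - c i) / s i) l atTop) :
    Tendsto (fun i => (s i)⁻¹ * ∑ k ∈ Finset.Icc (a i) (b i), f ((k - c i) / s i)) l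
      (𝓝 (∫ x, f x)) := by
  have hC : 0 ≤ C := by simpa using (abs_nonneg _).trans (hfC 0)
  refine tendsto_riemann_sum hf ((integrable_exp_neg_mul_sq (half_pos hβ)).const_mul
    (C * Real.exp β)) (fun x y hxy => ?_) hs ha hb
  calc |f y| ≤ C * Real.exp (-β * y ^ 2) := hfC y
    _ ≤ C * (Real.exp β * Real.exp (-(β / 2) * x ^ 2)) :=
      mul_le_mul_of_nonneg_left (exp_neg_mul_sq_le hβ.le hxy) hC
    _ = C * Real.exp β * Real.exp (-(β / 2) * x ^ 2) := by ring

lemma tendsto_ceil_sub_mul_sub_div_atBot {κ : ι → ℝ} (hs : ∀ᶠ i in l, 1 ≤ s i)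
    (hκ : Tendsto κ l atTop) :
    Tendsto (fun i => ((⌈c i - s i * κ i⌉ : ℤ) - c i) / s i) l atBot := by
  refine tendsto_atBot_mono' l ?_
    (tendsto_atBot_add_const_left l 1 (tendsto_neg_atTop_atBot.comp hκ))
  filter_upwards [hs] with i hi
  have := Int.ceil_lt_add_one (c i - s i * κ i)
  rw [Function.comp_apply, div_le_iff₀ (by positivity)]
  linarith

lemma tendsto_floor_add_mul_sub_div_atTop {κ : ι → ℝ} (hs : ∀ᶠ i in l, 1 ≤ s i)
    (hκ : Tendsto κ l atTop) :
    Tendsto (fun i => ((⌊c i + s i * κ i⌋ : ℤ) - c i) / s i) l atTop := by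
  refine tendsto_atTop_mono' l ?_ (tendsto_atTop_add_const_right l (-1) hκ)
  filter_upwards [hs] with i hi
  have := Int.sub_one_lt_floor (c i + s i * κ i)
  rw [le_div_iff₀ (by positivity)]
  linarith

end

theorem riemann_sum_gaussian_window_general (g : ℝ → ℝ) (hg_cont : Continuous g)
    (hg_bdd : ∃ C : ℝ, ∀ x, |g x| ≤ C)
    (σ : ℝ) (hσ : 0 < σ) (m : ℝ) (κ : ℕ → ℝ)
    (hκ : Tendsto κ atTop atTop) :
    Tendsto (fun N : ℕ =>
        (1 / Real.sqrt (2 * π * N * σ ^ 2)) *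
          ∑ k ∈ Finset.Icc ⌈(N : ℝ) * m - Real.sqrt N * κ N⌉ ⌊(N : ℝ) * m + Real.sqrt N * κ N⌋,
            g (((k : ℝ) - N * m) / Real.sqrt N) *
              Real.exp (-(((k : ℝ) - N * m) / Real.sqrt N) ^ 2 / (2 * σ ^ 2)))
      atTop
      (nhds ((1 / Real.sqrt (2 * π * σ ^ 2)) *
        ∫ x : ℝ, g x * Real.exp (-x ^ 2 / (2 * σ ^ 2)))) := by
  obtain ⟨C, hC⟩ := hg_bdd
  have hsqrt : Tendsto (fun N : ℕ => Real.sqrt N) atTop atTop :=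
    Real.tendsto_sqrt_atTop.comp tendsto_natCast_atTop_atTop
  have hsqrt₁ : ∀ᶠ N : ℕ in atTop, 1 ≤ Real.sqrt N := hsqrt.eventually_ge_atTop 1
  have hgauss : ∀ x, |g x * Real.exp (-x ^ 2 / (2 * σ ^ 2))|
      ≤ C * Real.exp (-(2 * σ ^ 2)⁻¹ * x ^ 2) := fun x => by
    rw [abs_mul, Real.abs_exp, neg_mul, ← div_eq_inv_mul, neg_div]
    exact mul_le_mul_of_nonneg_right (hC x) (Real.exp_pos _).le
  have hsum := (tendsto_riemann_sum_of_abs_le_gaussian (c := fun N : ℕ => N * m)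
    (f := fun x => g x * Real.exp (-x ^ 2 / (2 * σ ^ 2)))
    (by fun_prop)
    (inv_pos.2 (by positivity)) hgauss hsqrt
    (tendsto_ceil_sub_mul_sub_div_atBot hsqrt₁ hκ)
    (tendsto_floor_add_mul_sub_div_atTop hsqrt₁ hκ)).const_mul (1 / Real.sqrt (2 * π * σ ^ 2))
  refine hsum.congr fun N => ?_
  rw [show 2 * π * (N : ℝ) * σ ^ 2 = 2 * π * σ ^ 2 * N by ring,
    Real.sqrt_mul (by positivity : 0 ≤ 2 * π * σ ^ 2) N]
  ring

/-- Riemann-sum approximation over growing windows: for bounded continuous `g ≥ 0`,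
`σ² > 0`, and `κ_N → ∞` with `κ_N = o(√N)`, the sums
`(2πNσ²)^{-1/2} ∑_{|k - Nm| ≤ √N κ_N} g((k-Nm)/√N) e^{-(k-Nm)²/(2Nσ²)}`
converge to `(2πσ²)^{-1/2} ∫ g(x) e^{-x²/(2σ²)} dx`. -/
theorem riemann_sum_gaussian_window (g : ℝ → ℝ) (hg_cont : Continuous g)
    (hg_bdd : ∃ C : ℝ, ∀ x, |g x| ≤ C) (hg_nonneg : ∀ x, 0 ≤ g x)
    (σ : ℝ) (hσ : 0 < σ) (m : ℝ) (κ : ℕ → ℝ)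
    (hκ : Tendsto κ atTop atTop)
    (hκo : Tendsto (fun N : ℕ => κ N / Real.sqrt N) atTop (nhds 0)) :
    Tendsto (fun N : ℕ =>
        (1 / Real.sqrt (2 * π * N * σ ^ 2)) *
          ∑ k ∈ Finset.Icc ⌈(N : ℝ) * m - Real.sqrt N * κ N⌉ ⌊(N : ℝ) * m + Real.sqrt N * κ N⌋,
            g (((k : ℝ) - N * m) / Real.sqrt N) *
              Real.exp (-(((k : ℝ) - N * m) / Real.sqrt N) ^ 2 / (2 * σ ^ 2)))
      atTop
      (nhds ((1 / Real.sqrt (2 * π * σ ^ 2)) *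
        ∫ x : ℝ, g x * Real.exp (-x ^ 2 / (2 * σ ^ 2)))) :=
  riemann_sum_gaussian_window_general g hg_cont hg_bdd σ hσ m κ hκ
end
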